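/- arXiv:2505.12611 — 9 statements merged into one kernel-verified Lean document; each statement's English description precedes it below -/
import Mathlib

section
/- Let N ≥ 1 be a natural number, γ > 0 a real number, F : {0,…,N−1} → ℝ a sequence of shaping rewards, and m : {0,…,N−1} × {0,…,N−1} → ℝ a matching function that is fully matching (for every t', ∑_{j=t'}^{N−1} m(j,t') = 1) and future-agnostic (m(t,t') = 0 whenever t' > t). Define the GRM shaped reward F'_t = F_t − ∑_{i=0}^{t} γ^{i−t} F_i · m(t,i). Then the total discounted shaped return vanishes: ∑_{t=0}^{N−1} γ^t F'_t = 0. -/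
/-- **GRM has zero total discounted shaped return.**
Let `N ≥ 1`, `γ > 0`, `F : {0,…,N-1} → ℝ` shaping rewards, and
`m : {0,…,N-1}² → ℝ` a matching function that is fully matching
(`∀ t' < N, ∑_{j=t'}^{N-1} m j t' = 1`) and future-agnostic
(`m t t' = 0` whenever `t' > t`). With the GRM shaped reward
`F' t = F t - ∑_{i=0}^{t} γ^(i-t) * F i * m t i`, the total discounted
shaped return vanishes: `∑_{t=0}^{N-1} γ^t * F' t = 0`. -/
theorem stmt_3 (N : ℕ) (hN : 1 ≤ N) (γ : ℝ) (hγ : 0 < γ)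
    (F : ℕ → ℝ) (m : ℕ → ℕ → ℝ)
    (hfull : ∀ t' < N, ∑ j ∈ Finset.Ico t' N, m j t' = 1)
    (hfa : ∀ t < N, ∀ t' < N, t < t' → m t t' = 0)
    (F' : ℕ → ℝ)
    (hF' : ∀ t < N, F' t =
      F t - ∑ i ∈ Finset.range (t + 1), γ ^ ((i : ℤ) - (t : ℤ)) * F i * m t i) :
    ∑ t ∈ Finset.range N, γ ^ t * F' t = 0 := by
  have hne : γ ≠ 0 := ne_of_gt hγ
  have key : ∀ t i : ℕ,
      γ ^ t * (γ ^ ((i : ℤ) - (t : ℤ)) * F i * m t i) = γ ^ i * F i * m t i := by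
    intro t i
    have : (γ : ℝ) ^ t * γ ^ ((i : ℤ) - (t : ℤ)) = γ ^ i := by
      rw [← zpow_natCast γ t, ← zpow_natCast γ i, ← zpow_add₀ hne]
      ring_nf
    rw [← mul_assoc, ← mul_assoc, this]
  calc ∑ t ∈ Finset.range N, γ ^ t * F' t
      = ∑ t ∈ Finset.range N, (γ ^ t * F t
          - ∑ i ∈ Finset.range (t + 1), γ ^ i * F i * m t i) := by
        refine Finset.sum_congr rfl fun t ht => ?_
        rw [hF' t (Finset.mem_range.mp ht), mul_sub, Finset.mul_sum]
        congr 1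
        exact Finset.sum_congr rfl fun i _ => key t i
    _ = ∑ t ∈ Finset.range N, γ ^ t * F t
          - ∑ t ∈ Finset.range N, ∑ i ∈ Finset.range (t + 1), γ ^ i * F i * m t i := by
        rw [Finset.sum_sub_distrib]
    _ = 0 := by
        have hswap : ∑ t ∈ Finset.range N, ∑ i ∈ Finset.range (t + 1), γ ^ i * F i * m t i
            = ∑ i ∈ Finset.range N, ∑ t ∈ Finset.Ico i N, γ ^ i * F i * m t i := by
          refine Finset.sum_comm' fun t i => ?_
          simp only [Finset.mem_range, Finset.mem_Ico]
          omega
        rw [hswap]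
        have : ∀ i ∈ Finset.range N,
            ∑ t ∈ Finset.Ico i N, γ ^ i * F i * m t i = γ ^ i * F i := by
          intro i hi
          rw [← Finset.mul_sum, hfull i (Finset.mem_range.mp hi), mul_one]
        rw [Finset.sum_congr rfl this, sub_self]
end

section
/- Let N ≥ 1 be a natural number, γ > 0 a real number, F : {0,…,N−1} → ℝ a sequence of shaping rewards, and m : {0,…,N−1} × {0,…,N−1} → ℝ a matching function that is fully matching (for every t', ∑_{j=t'}^{N−1} m(j,t') = 1) and future-agnostic (m(t,t') = 0 whenever t' > t). Define the GRM shaped reward F'_t = F_t − ∑_{i=0}^{t} γ^{i−t} F_i · m(t,i). Then for every t with 0 ≤ t ≤ N−1, the discounted tail shaped return satisfies ∑_{j=t}^{N−1} γ^{j−t} F'_j = −∑_{i=0}^{t−1} γ^{i−t} F_i + ∑_{i=0}^{t−1} γ^{i−t} F_i · (∑_{j=i}^{t−1} m(j,i)). -/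
/-- **GRM tail return formula.**
Let `N ≥ 1`, `γ > 0`, `F : {0,…,N-1} → ℝ` shaping rewards, and
`m : {0,…,N-1}² → ℝ` a matching function that is fully matching
(`∀ t' < N, ∑_{j=t'}^{N-1} m j t' = 1`) and future-agnostic
(`m t t' = 0` whenever `t' > t`). With the GRM shaped reward
`F' t = F t - ∑_{i=0}^{t} γ^(i-t) * F i * m t i`, for every `0 ≤ t ≤ N-1`
the discounted tail shaped return satisfies
`∑_{j=t}^{N-1} γ^(j-t) * F' j
  = -∑_{i=0}^{t-1} γ^(i-t) * F i + ∑_{i=0}^{t-1} γ^(i-t) * F i * (∑_{j=i}^{t-1} m j i)`. -/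
theorem stmt_4 (N : ℕ) (hN : 1 ≤ N) (γ : ℝ) (hγ : 0 < γ)
    (F : ℕ → ℝ) (m : ℕ → ℕ → ℝ)
    (hfull : ∀ t' < N, ∑ j ∈ Finset.Ico t' N, m j t' = 1)
    (hfa : ∀ t < N, ∀ t' < N, t < t' → m t t' = 0)
    (F' : ℕ → ℝ)
    (hF' : ∀ t < N, F' t =
      F t - ∑ i ∈ Finset.range (t + 1), γ ^ ((i : ℤ) - (t : ℤ)) * F i * m t i)
    (t : ℕ) (ht : t ≤ N - 1) :
    ∑ j ∈ Finset.Ico t N, γ ^ (j - t) * F' j =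
      -∑ i ∈ Finset.range t, γ ^ ((i : ℤ) - (t : ℤ)) * F i +
        ∑ i ∈ Finset.range t, γ ^ ((i : ℤ) - (t : ℤ)) * F i * (∑ j ∈ Finset.Ico i t, m j i) := by
  have htN : t < N := by omega
  have hγ0 : γ ≠ 0 := ne_of_gt hγ
  -- Step 1: rewrite each term of the LHS
  have key : ∀ j ∈ Finset.Ico t N,
      γ ^ (j - t) * F' j =
        γ ^ ((j : ℤ) - (t : ℤ)) * F j -
          ∑ i ∈ Finset.range N, γ ^ ((i : ℤ) - (t : ℤ)) * F i * m j i := by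
    intro j hj
    obtain ⟨htj, hjN⟩ := Finset.mem_Ico.mp hj
    have hpow : (γ : ℝ) ^ (j - t) = γ ^ ((j : ℤ) - (t : ℤ)) := by
      rw [← zpow_natCast]
      congr 1
      omega
    rw [hpow, hF' j hjN, mul_sub]
    congr 1
    rw [Finset.mul_sum]
    have step1 : ∑ i ∈ Finset.range (j + 1),
        γ ^ ((j : ℤ) - (t : ℤ)) * (γ ^ ((i : ℤ) - (j : ℤ)) * F i * m j i)
        = ∑ i ∈ Finset.range (j + 1), γ ^ ((i : ℤ) - (t : ℤ)) * F i * m j i := by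
      apply Finset.sum_congr rfl
      intro i _
      rw [← mul_assoc, ← mul_assoc, ← zpow_add₀ hγ0,
        show (j : ℤ) - t + ((i : ℤ) - j) = (i : ℤ) - t by ring]
    rw [step1]
    apply Finset.sum_subset (Finset.range_subset_range.mpr (by omega))
    intro i hiN hij
    have hji : j < i := by
      simp only [Finset.mem_range] at hij
      omega
    rw [hfa j hjN i (Finset.mem_range.mp hiN) hji, mul_zero]
  rw [Finset.sum_congr rfl key, Finset.sum_sub_distrib, Finset.sum_comm]
  -- pull the constant out of the inner sum
  have step2 : ∑ i ∈ Finset.range N, ∑ j ∈ Finset.Ico t N,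
      γ ^ ((i : ℤ) - (t : ℤ)) * F i * m j i
      = ∑ i ∈ Finset.range N,
          γ ^ ((i : ℤ) - (t : ℤ)) * F i * ∑ j ∈ Finset.Ico t N, m j i := by
    apply Finset.sum_congr rfl
    intro i _
    rw [Finset.mul_sum]
  rw [step2]
  -- split range N into range t and Ico t N
  rw [Finset.range_eq_Ico, ← Finset.sum_Ico_consecutive _ (Nat.zero_le t) htN.le,
    ← Finset.range_eq_Ico]
  -- for i ∈ Ico t N, the inner sum is 1
  have h1 : ∀ i ∈ Finset.Ico t N,
      γ ^ ((i : ℤ) - (t : ℤ)) * F i * ∑ j ∈ Finset.Ico t N, m j i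
        = γ ^ ((i : ℤ) - (t : ℤ)) * F i := by
    intro i hi
    obtain ⟨hti, hiN⟩ := Finset.mem_Ico.mp hi
    have hsplit : ∑ j ∈ Finset.Ico t i, m j i + ∑ j ∈ Finset.Ico i N, m j i
        = ∑ j ∈ Finset.Ico t N, m j i :=
      Finset.sum_Ico_consecutive _ hti hiN.le
    have hzero : ∑ j ∈ Finset.Ico t i, m j i = 0 := by
      apply Finset.sum_eq_zero
      intro j hj
      obtain ⟨_, hji⟩ := Finset.mem_Ico.mp hj
      exact hfa j (by omega) i hiN hji
    rw [← hsplit, hzero, hfull i hiN, zero_add, mul_one]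
  -- for i < t, the inner sum is 1 - ∑_{j∈Ico i t} m j i
  have h2 : ∀ i ∈ Finset.range t,
      γ ^ ((i : ℤ) - (t : ℤ)) * F i * ∑ j ∈ Finset.Ico t N, m j i
        = γ ^ ((i : ℤ) - (t : ℤ)) * F i
            - γ ^ ((i : ℤ) - (t : ℤ)) * F i * ∑ j ∈ Finset.Ico i t, m j i := by
    intro i hi
    have hit : i < t := Finset.mem_range.mp hi
    have hsplit : ∑ j ∈ Finset.Ico i t, m j i + ∑ j ∈ Finset.Ico t N, m j i
        = ∑ j ∈ Finset.Ico i N, m j i :=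
      Finset.sum_Ico_consecutive _ hit.le htN.le
    have : ∑ j ∈ Finset.Ico t N, m j i
        = 1 - ∑ j ∈ Finset.Ico i t, m j i := by
      rw [← hfull i (by omega), ← hsplit]; ring
    rw [this]; ring
  rw [Finset.sum_congr rfl h1, Finset.sum_congr rfl h2, Finset.sum_sub_distrib]
  ring
end

section
/- Let N ≥ 1 be a natural number, γ > 0 a real number, and m : {0,…,N−1} × {0,…,N−1} → ℝ a matching function that is fully matching (for every t', ∑_{j=t'}^{N−1} m(j,t') = 1) and future-agnostic (m(t,t') = 0 whenever t' > t). Suppose F, G : {0,…,N−1} → ℝ are two shaping-reward sequences with F_i = G_i for all i < t, and let F'_j = F_j − ∑_{i=0}^{j} γ^{i−j} F_i · m(j,i) and G'_j = G_j − ∑_{i=0}^{j} γ^{i−j} G_i · m(j,i) be their GRM shaped rewards. Then the discounted tail shaped returns from time t coincide: ∑_{j=t}^{N−1} γ^{j−t} F'_j = ∑_{j=t}^{N−1} γ^{j−t} G'_j. In particular, the cumulative discounted GRM return from time t does not depend on the shaping rewards granted at times t and later. -/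
/-- **Action-independence of the tail GRM return.**
Let `N ≥ 1`, `γ > 0`, and `m : {0,…,N-1}² → ℝ` a matching function that is fully
matching (`∀ t' < N, ∑_{j=t'}^{N-1} m j t' = 1`) and future-agnostic
(`m t t' = 0` whenever `t' > t`). If two shaping-reward sequences `F, G` agree at
all times `i < t`, then their GRM shaped rewards
`F' j = F j - ∑_{i=0}^{j} γ^(i-j) * F i * m j i` (and similarly `G'`) have equal
discounted tail returns from time `t`:
`∑_{j=t}^{N-1} γ^(j-t) * F' j = ∑_{j=t}^{N-1} γ^(j-t) * G' j`. -/
theorem stmt_5 (N : ℕ) (hN : 1 ≤ N) (γ : ℝ) (hγ : 0 < γ)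
    (m : ℕ → ℕ → ℝ)
    (hfull : ∀ t' < N, ∑ j ∈ Finset.Ico t' N, m j t' = 1)
    (hfa : ∀ t < N, ∀ t' < N, t < t' → m t t' = 0)
    (t : ℕ) (ht : t ≤ N - 1)
    (F G : ℕ → ℝ) (hagree : ∀ i < t, F i = G i)
    (F' G' : ℕ → ℝ)
    (hF' : ∀ j < N, F' j =
      F j - ∑ i ∈ Finset.range (j + 1), γ ^ ((i : ℤ) - (j : ℤ)) * F i * m j i)
    (hG' : ∀ j < N, G' j =
      G j - ∑ i ∈ Finset.range (j + 1), γ ^ ((i : ℤ) - (j : ℤ)) * G i * m j i) :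
    ∑ j ∈ Finset.Ico t N, γ ^ (j - t) * F' j = ∑ j ∈ Finset.Ico t N, γ ^ (j - t) * G' j := by
  have hγ0 : γ ≠ 0 := ne_of_gt hγ
  have key : ∀ (F : ℕ → ℝ),
      ∑ j ∈ Finset.Ico t N, γ ^ (j - t) *
        (F j - ∑ i ∈ Finset.range (j + 1), γ ^ ((i : ℤ) - (j : ℤ)) * F i * m j i)
      = - ∑ j ∈ Finset.Ico t N, ∑ i ∈ Finset.range t,
            γ ^ (j - t) * (γ ^ ((i : ℤ) - (j : ℤ)) * F i * m j i) := by
    intro F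
    have step1 : ∀ j ∈ Finset.Ico t N,
        γ ^ (j - t) * (F j - ∑ i ∈ Finset.range (j + 1),
            γ ^ ((i : ℤ) - (j : ℤ)) * F i * m j i)
        = γ ^ (j - t) * F j
          - (∑ i ∈ Finset.range t, γ ^ (j - t) * (γ ^ ((i : ℤ) - (j : ℤ)) * F i * m j i)
             + ∑ i ∈ Finset.Ico t (j + 1),
                 γ ^ (j - t) * (γ ^ ((i : ℤ) - (j : ℤ)) * F i * m j i)) := by
      intro j hj
      rw [Finset.mem_Ico] at hj
      rw [mul_sub, Finset.mul_sum]
      congr 1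
      rw [Finset.range_eq_Ico,
        ← Finset.sum_Ico_consecutive _ (Nat.zero_le t) (by omega : t ≤ j + 1),
        Finset.range_eq_Ico]
    rw [Finset.sum_congr rfl step1, Finset.sum_sub_distrib, Finset.sum_add_distrib]
    have hC : ∑ j ∈ Finset.Ico t N, ∑ i ∈ Finset.Ico t (j + 1),
          γ ^ (j - t) * (γ ^ ((i : ℤ) - (j : ℤ)) * F i * m j i)
        = ∑ j ∈ Finset.Ico t N, γ ^ (j - t) * F j := by
      have hpt : ∀ j ∈ Finset.Ico t N, ∀ i ∈ Finset.Ico t (j + 1),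
          γ ^ (j - t) * (γ ^ ((i : ℤ) - (j : ℤ)) * F i * m j i)
          = (γ ^ (i - t) * F i) * m j i := by
        intro j hj i hi
        rw [Finset.mem_Ico] at hj hi
        have hp : γ ^ (j - t) * γ ^ ((i : ℤ) - (j : ℤ)) = γ ^ (i - t) := by
          rw [← zpow_natCast γ (j - t), ← zpow_natCast γ (i - t), ← zpow_add₀ hγ0]
          congr 1
          push_cast [Nat.cast_sub hj.1, Nat.cast_sub hi.1]
          ring
        calc γ ^ (j - t) * (γ ^ ((i : ℤ) - (j : ℤ)) * F i * m j i)
            = (γ ^ (j - t) * γ ^ ((i : ℤ) - (j : ℤ))) * F i * m j i := by ring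
          _ = (γ ^ (i - t) * F i) * m j i := by rw [hp]
      rw [Finset.sum_congr rfl (fun j hj => Finset.sum_congr rfl (hpt j hj)),
        ← Finset.sum_Ico_Ico_comm]
      refine Finset.sum_congr rfl fun i hi => ?_
      rw [← Finset.mul_sum, hfull i (Finset.mem_Ico.mp hi).2, mul_one]
    rw [hC]
    ring
  have hFeq : ∑ j ∈ Finset.Ico t N, γ ^ (j - t) * F' j
      = ∑ j ∈ Finset.Ico t N, γ ^ (j - t) *
        (F j - ∑ i ∈ Finset.range (j + 1), γ ^ ((i : ℤ) - (j : ℤ)) * F i * m j i) :=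
    Finset.sum_congr rfl fun j hj => by
      rw [hF' j (Finset.mem_Ico.mp hj).2]
  have hGeq : ∑ j ∈ Finset.Ico t N, γ ^ (j - t) * G' j
      = ∑ j ∈ Finset.Ico t N, γ ^ (j - t) *
        (G j - ∑ i ∈ Finset.range (j + 1), γ ^ ((i : ℤ) - (j : ℤ)) * G i * m j i) :=
    Finset.sum_congr rfl fun j hj => by
      rw [hG' j (Finset.mem_Ico.mp hj).2]
  rw [hFeq, hGeq, key F, key G]
  congr 1
  refine Finset.sum_congr rfl fun j _ => Finset.sum_congr rfl fun i hi => ?_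
  rw [hagree i (Finset.mem_range.mp hi)]
end

section
/- Let N ≥ 2 and 1 ≤ D ≤ N−1 be natural numbers, γ > 0 a real number, and F : {0,…,N−1} → ℝ a sequence of shaping rewards. Then the total discounted return of the delayed GRM rewards vanishes: ∑_{t=0}^{N−1} γ^t F'_t(D) = 0, where F'_t(D) = F_t if t < D; F'_t(D) = F_t − γ^{−D} F_{t−D} if D ≤ t < N−1; and F'_{N−1}(D) = ∑_{i=0}^{D−1} −γ^{i−D} F_{N−1−D+i}. -/
/-- The delayed GRM family with delay parameter `D ≥ 0` over a horizon `N`,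
discount `γ > 0`, and shaping rewards `F : {0,…,N-1} → ℝ`:
`F'_t(D) = F t` if `t < D`; `F'_t(D) = F t - γ^(-D) * F (t-D)` if `D ≤ t < N-1`;
and `F'_{N-1}(D) = ∑_{i=0}^{D-1} -γ^(i-D) * F (N-1-D+i)`. -/
noncomputable def delayedGRM (N D : ℕ) (γ : ℝ) (F : ℕ → ℝ) (t : ℕ) : ℝ :=
  if t = N - 1 then ∑ i ∈ Finset.range D, -(γ ^ ((i : ℤ) - (D : ℤ)) * F (N - 1 - D + i))
  else if t < D then F t
  else F t - γ ^ (-(D : ℤ)) * F (t - D)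

/-- **Delayed GRM has zero total discounted return.**
Let `N ≥ 2`, `1 ≤ D ≤ N-1`, `γ > 0`, and `F : {0,…,N-1} → ℝ`. Then
`∑_{t=0}^{N-1} γ^t * F'_t(D) = 0`. -/
theorem stmt_8 (N D : ℕ) (hN : 2 ≤ N) (hD1 : 1 ≤ D) (hD2 : D ≤ N - 1)
    (γ : ℝ) (hγ : 0 < γ) (F : ℕ → ℝ) :
    ∑ t ∈ Finset.range N, γ ^ t * delayedGRM N D γ F t = 0 := by
  obtain ⟨M, rfl⟩ : ∃ M, N = M + 1 := ⟨N - 1, by omega⟩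
  have hDM : D ≤ M := by omega
  have hγ0 : γ ≠ 0 := ne_of_gt hγ
  rw [Finset.sum_range_succ]
  -- the sum over t < M
  have h1 : ∑ t ∈ Finset.range M, γ ^ t * delayedGRM (M+1) D γ F t
      = ∑ t ∈ Finset.range M, γ ^ t * F t
        - ∑ s ∈ Finset.range (M - D), γ ^ s * F s := by
    have hterm : ∀ t ∈ Finset.range M, γ ^ t * delayedGRM (M+1) D γ F t
        = γ ^ t * F t - (if D ≤ t then γ ^ (t - D) * F (t - D) else 0) := by
      intro t ht
      simp only [Finset.mem_range] at ht
      have hne : t ≠ M := by omega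
      by_cases h : t < D
      · simp [delayedGRM, hne, h, Nat.not_le.mpr h]
      · have hpow : γ ^ t * γ ^ (-(D:ℤ)) = γ ^ (t - D) := by
          have h2 : (((t - D : ℕ)) : ℤ) = (t : ℤ) + (-(D:ℤ)) := by
            push_cast [Nat.cast_sub (by omega : D ≤ t)]; ring
          rw [← zpow_natCast γ t, ← zpow_natCast γ (t - D), h2, zpow_add₀ hγ0]
        simp only [delayedGRM, Nat.add_sub_cancel, if_neg hne, if_neg h]
        rw [mul_sub, ← mul_assoc, hpow, if_pos (by omega)]
    rw [Finset.sum_congr rfl hterm, Finset.sum_sub_distrib]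
    congr 1
    have hsplit : ∑ t ∈ Finset.range M, (if D ≤ t then γ ^ (t - D) * F (t - D) else 0)
        = ∑ t ∈ Finset.Ico D M, (if D ≤ t then γ ^ (t - D) * F (t - D) else 0) := by
      rw [Finset.range_eq_Ico, ← Finset.sum_Ico_consecutive _ (Nat.zero_le D) hDM]
      have : ∑ t ∈ Finset.Ico 0 D, (if D ≤ t then γ ^ (t - D) * F (t - D) else 0) = 0 := by
        apply Finset.sum_eq_zero
        intro t ht
        simp only [Finset.mem_Ico] at ht
        rw [if_neg (by omega)]
      rw [this, zero_add]
    rw [hsplit, Finset.sum_Ico_eq_sum_range]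
    apply Finset.sum_congr rfl
    intro i hi
    rw [if_pos (by omega), Nat.add_sub_cancel_left]
  rw [h1]
  -- the last term
  have hlast : γ ^ M * delayedGRM (M+1) D γ F M
      = - ∑ i ∈ Finset.range D, γ ^ (M - D + i) * F (M - D + i) := by
    have : delayedGRM (M+1) D γ F M
        = ∑ i ∈ Finset.range D, -(γ ^ ((i : ℤ) - (D : ℤ)) * F (M - D + i)) := by
      simp [delayedGRM]
    rw [this, Finset.mul_sum, ← Finset.sum_neg_distrib]
    apply Finset.sum_congr rfl
    intro i hi
    simp only [Finset.mem_range] at hi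
    have hpow : γ ^ M * γ ^ ((i : ℤ) - (D : ℤ)) = γ ^ (M - D + i) := by
      have h2 : (((M - D + i : ℕ)) : ℤ) = (M : ℤ) + ((i : ℤ) - (D : ℤ)) := by
        push_cast [Nat.cast_sub hDM]; ring
      rw [← zpow_natCast γ M, ← zpow_natCast γ (M - D + i), h2, zpow_add₀ hγ0]
    rw [mul_neg, ← mul_assoc, hpow]
  rw [hlast]
  -- the remaining sum telescopes
  have h2 : ∑ t ∈ Finset.range M, γ ^ t * F t - ∑ s ∈ Finset.range (M - D), γ ^ s * F s
      = ∑ i ∈ Finset.range D, γ ^ (M - D + i) * F (M - D + i) := by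
    have := Finset.sum_Ico_eq_sub (f := fun t => γ ^ t * F t) (Nat.sub_le M D)
    rw [← this, Finset.sum_Ico_eq_sum_range]
    have hMD : M - (M - D) = D := by omega
    rw [hMD]
  rw [h2]
  ring
end

section
/- Let N ≥ 2 and 1 ≤ D ≤ N−1 be natural numbers and γ > 0 a real number. Define m^D : {0,…,N−1} × {0,…,N−1} → ℝ by m^D(t,t') = 1 if either (t = t' + D and t < N−1) or (t = N−1 and t' ≥ N−1−D), and m^D(t,t') = 0 otherwise. Then (i) m^D is fully matching: for every t', ∑_{j=t'}^{N−1} m^D(j,t') = 1; (ii) m^D is future-agnostic: m^D(t,t') = 0 whenever t' > t; and (iii) for every shaping-reward sequence F : {0,…,N−1} → ℝ, the GRM shaped reward F_t − ∑_{i=0}^{t} γ^{i−t} F_i · m^D(t,i) equals the delayed GRM reward F'_t(D), namely F_t if t < D, F_t − γ^{−D} F_{t−D} if D ≤ t < N−1, and ∑_{i=0}^{D−1} −γ^{i−D} F_{N−1−D+i} if t = N−1. -/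
/-- The matching function realizing delayed GRM: `mD N D t t' = 1` if either
(`t = t' + D` and `t < N-1`) or (`t = N-1` and `t' ≥ N-1-D`), and `0` otherwise. -/
def mD (N D : ℕ) (t t' : ℕ) : ℝ :=
  if (t = t' + D ∧ t < N - 1) ∨ (t = N - 1 ∧ N - 1 - D ≤ t') then 1 else 0

/-- **The delayed GRM rewards arise from a fully matching, future-agnostic matching
function.** Let `N ≥ 2`, `1 ≤ D ≤ N-1`, and `γ > 0`. Then (i) `mD N D` is fully
matching: `∀ t' < N, ∑_{j=t'}^{N-1} mD N D j t' = 1`; (ii) `mD N D` is future-agnostic: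
`mD N D t t' = 0` whenever `t' > t` (for `t, t'` in `{0,…,N-1}`); and (iii) for every
shaping-reward sequence `F : {0,…,N-1} → ℝ` and every `t < N`, the GRM shaped reward
`F t - ∑_{i=0}^{t} γ^(i-t) * F i * mD N D t i` equals the delayed GRM reward `F'_t(D)`,
namely `F t` if `t < D`, `F t - γ^(-D) * F (t-D)` if `D ≤ t < N-1`, and
`∑_{i=0}^{D-1} -γ^(i-D) * F (N-1-D+i)` if `t = N-1`. -/
theorem stmt_9 (N D : ℕ) (hN : 2 ≤ N) (hD1 : 1 ≤ D) (hD2 : D ≤ N - 1)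
    (γ : ℝ) (hγ : 0 < γ) :
    (∀ t' < N, ∑ j ∈ Finset.Ico t' N, mD N D j t' = 1) ∧
    (∀ t < N, ∀ t' < N, t < t' → mD N D t t' = 0) ∧
    (∀ F : ℕ → ℝ, ∀ t < N,
      F t - ∑ i ∈ Finset.range (t + 1), γ ^ ((i : ℤ) - (t : ℤ)) * F i * mD N D t i =
        delayedGRM N D γ F t) := by
  refine ⟨?_, ?_, ?_⟩
  · intro t' ht'
    by_cases h : N - 1 - D ≤ t'
    · rw [Finset.sum_eq_single_of_mem (N - 1)]
      · unfold mD; rw [if_pos (Or.inr ⟨rfl, h⟩)]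
      · simp only [Finset.mem_Ico]; omega
      · intro j hj hne
        simp only [Finset.mem_Ico] at hj
        unfold mD; rw [if_neg]
        rintro (⟨h1, h2⟩ | ⟨h1, _⟩) <;> omega
    · rw [Finset.sum_eq_single_of_mem (t' + D)]
      · unfold mD; rw [if_pos (Or.inl ⟨rfl, by omega⟩)]
      · simp only [Finset.mem_Ico]; omega
      · intro j hj hne
        simp only [Finset.mem_Ico] at hj
        unfold mD; rw [if_neg]
        rintro (⟨h1, _⟩ | ⟨h1, h2⟩) <;> omega
  · intro t ht t' ht' hlt
    unfold mD; rw [if_neg]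
    rintro (⟨h1, h2⟩ | ⟨h1, h2⟩) <;> omega
  · intro F t ht
    by_cases htN : t = N - 1
    · subst htN
      unfold delayedGRM; rw [if_pos rfl]
      have hsub : Finset.Ico (N - 1 - D) (N - 1 + 1) ⊆ Finset.range (N - 1 + 1) := by
        intro x hx; simp only [Finset.mem_Ico] at hx; simp only [Finset.mem_range]; omega
      have h1 : ∑ i ∈ Finset.range (N - 1 + 1),
          γ ^ ((i : ℤ) - ((N - 1 : ℕ) : ℤ)) * F i * mD N D (N - 1) i
          = ∑ i ∈ Finset.Ico (N - 1 - D) (N - 1 + 1),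
          γ ^ ((i : ℤ) - ((N - 1 : ℕ) : ℤ)) * F i := by
        rw [← Finset.sum_subset hsub]
        · apply Finset.sum_congr rfl
          intro i hi
          simp only [Finset.mem_Ico] at hi
          unfold mD; rw [if_pos (Or.inr ⟨rfl, hi.1⟩)]; ring
        · intro i hi hni
          simp only [Finset.mem_range] at hi
          simp only [Finset.mem_Ico] at hni
          unfold mD; rw [if_neg]
          · ring
          · rintro (⟨h1, h2⟩ | ⟨h1, h2⟩) <;> omega
      rw [h1, Finset.sum_Ico_succ_top (by omega : N - 1 - D ≤ N - 1)]
      rw [Finset.sum_Ico_eq_sum_range]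
      have hDeq : N - 1 - (N - 1 - D) = D := by omega
      rw [hDeq]
      have h2 : ∀ i ∈ Finset.range D,
          γ ^ (((N - 1 - D + i : ℕ) : ℤ) - ((N - 1 : ℕ) : ℤ)) * F (N - 1 - D + i)
          = γ ^ ((i : ℤ) - (D : ℤ)) * F (N - 1 - D + i) := by
        intro i hi
        congr 2
        have : ((N - 1 - D + i : ℕ) : ℤ) = (N : ℤ) - 1 - D + i := by
          push_cast [Nat.sub_sub]; omega
        rw [this]
        push_cast
        omega
      rw [Finset.sum_congr rfl h2]
      have h3 : ((N - 1 : ℕ) : ℤ) - ((N - 1 : ℕ) : ℤ) = 0 := by ring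
      rw [h3, zpow_zero, one_mul, Finset.sum_neg_distrib]
      ring
    · have htlt : t < N - 1 := by omega
      unfold delayedGRM; rw [if_neg htN]
      by_cases htD : t < D
      · rw [if_pos htD]
        have : ∑ i ∈ Finset.range (t + 1), γ ^ ((i : ℤ) - (t : ℤ)) * F i * mD N D t i = 0 := by
          apply Finset.sum_eq_zero
          intro i hi
          simp only [Finset.mem_range] at hi
          unfold mD; rw [if_neg]
          · ring
          · rintro (⟨h1, h2⟩ | ⟨h1, h2⟩) <;> omega
        rw [this]; ring
      · rw [if_neg htD]
        push_neg at htD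
        rw [Finset.sum_eq_single_of_mem (t - D)]
        · unfold mD; rw [if_pos (Or.inl ⟨by omega, htlt⟩)]
          have : ((t - D : ℕ) : ℤ) - (t : ℤ) = -(D : ℤ) := by
            rw [Nat.cast_sub htD]; ring
          rw [this]; ring
        · simp only [Finset.mem_range]; omega
        · intro i hi hne
          simp only [Finset.mem_range] at hi
          unfold mD; rw [if_neg]
          · ring
          · rintro (⟨h1, h2⟩ | ⟨h1, h2⟩) <;> omega
end

section
/- Let A be a finite nonempty set and f, g : A → ℝ. Write argmax f = {a ∈ A : ∀ b ∈ A, f(b) ≤ f(a)} and similarly for argmax (f+g). Then argmax f = argmax (f+g) if and only if both of the following hold: (i) g takes the same value on every element of argmax f (i.e., for all a, b ∈ argmax f, g(a) = g(b)); and (ii) for every ā ∉ argmax f and every a* ∈ argmax f, f(ā) + g(ā) < f(a*) + g(a*). -/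
/-- **Characterization of argmax-preserving additive shaping.**
Let `A` be a finite nonempty set and `f, g : A → ℝ`. Writing
`argmax f = {a | ∀ b, f b ≤ f a}` and similarly for `f + g`, we have
`argmax f = argmax (f + g)` iff (i) `g` is constant on `argmax f`, and
(ii) for every `ā ∉ argmax f` and every `a* ∈ argmax f`,
`f ā + g ā < f a* + g a*`. -/
theorem stmt_10 {A : Type*} [Fintype A] [Nonempty A] (f g : A → ℝ) :
    {a : A | ∀ b : A, f b ≤ f a} = {a : A | ∀ b : A, f b + g b ≤ f a + g a} ↔
      ((∀ a ∈ {a : A | ∀ b : A, f b ≤ f a}, ∀ a' ∈ {a : A | ∀ b : A, f b ≤ f a},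
          g a = g a') ∧
        (∀ abar : A, abar ∉ {a : A | ∀ b : A, f b ≤ f a} →
          ∀ astar ∈ {a : A | ∀ b : A, f b ≤ f a},
            f abar + g abar < f astar + g astar)) := by
  constructor
  · intro h
    constructor
    · intro a ha a' ha'
      have hfa : f a = f a' := le_antisymm (ha' a) (ha a')
      have ha2 : a ∈ {a : A | ∀ b : A, f b + g b ≤ f a + g a} := h ▸ ha
      have ha2' : a' ∈ {a : A | ∀ b : A, f b + g b ≤ f a + g a} := h ▸ ha'
      have : f a + g a = f a' + g a' := le_antisymm (ha2' a) (ha2 a')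
      linarith
    · intro abar habar astar hastar
      have habar2 : abar ∉ {a : A | ∀ b : A, f b + g b ≤ f a + g a} := h ▸ habar
      simp only [Set.mem_setOf_eq, not_forall, not_le] at habar2
      obtain ⟨b, hb⟩ := habar2
      have hastar2 : astar ∈ {a : A | ∀ b : A, f b + g b ≤ f a + g a} := h ▸ hastar
      exact lt_of_lt_of_le hb (hastar2 b)
  · rintro ⟨h1, h2⟩
    obtain ⟨a0, ha0⟩ := Finite.exists_max f
    have ha0' : a0 ∈ {a : A | ∀ b : A, f b ≤ f a} := ha0
    ext a
    simp only [Set.mem_setOf_eq]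
    constructor
    · intro ha b
      by_cases hb : b ∈ {a : A | ∀ b : A, f b ≤ f a}
      · have : f b = f a := le_antisymm (ha b) (hb a)
        have := h1 b hb a ha
        linarith
      · exact le_of_lt (h2 b hb a ha)
    · intro ha
      by_contra hna
      have := h2 a hna a0 ha0'
      have := ha a0
      linarith
end

section
/- Let (X, μ) be a probability space, γ ≥ 0 and ε > 0 real numbers, and V_E, Q_E, V_I ∈ ℝ constants with Q_E < V_E. Let F, V_I' : X → ℝ be integrable. Define pointwise Ω(x) = V_E − Q_E + V_I − γ·V_I'(x) − F(x) and F_2(x) = min(0, Ω(x) − ε) (the ADOPS correction in the case Q_E < V_E). Then Q_E + ∫ (F + F_2 + γ·V_I') dμ ≤ V_E + V_I − ε; in particular, Q_E + ∫ (F + F_2 + γ·V_I') dμ < V_E + V_I. -/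
open MeasureTheory

/-- **ADOPS keeps extrinsically suboptimal actions strictly suboptimal.**
Let `(X, μ)` be a probability space, `γ ≥ 0`, `ε > 0`, and `V_E, Q_E, V_I ∈ ℝ`
constants with `Q_E < V_E`. Let `F, V_I' : X → ℝ` be integrable. With
`Ω x = V_E − Q_E + V_I − γ·V_I' x − F x` and the ADOPS correction
`F₂ x = min 0 (Ω x − ε)` (the case `Q_E < V_E`), we have
`Q_E + ∫ (F + F₂ + γ·V_I') dμ ≤ V_E + V_I − ε`; in particular
`Q_E + ∫ (F + F₂ + γ·V_I') dμ < V_E + V_I`. -/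
theorem stmt_12 {X : Type*} [MeasurableSpace X] (μ : Measure X) [IsProbabilityMeasure μ]
    (γ ε V_E Q_E V_I : ℝ) (hγ : 0 ≤ γ) (hε : 0 < ε) (hQ : Q_E < V_E)
    (F V_I' : X → ℝ) (hF : Integrable F μ) (hV : Integrable V_I' μ)
    (Ω : X → ℝ) (hΩ : ∀ x, Ω x = V_E - Q_E + V_I - γ * V_I' x - F x)
    (F₂ : X → ℝ) (hF₂ : ∀ x, F₂ x = min 0 (Ω x - ε)) :
    Q_E + ∫ x, (F x + F₂ x + γ * V_I' x) ∂μ ≤ V_E + V_I - ε ∧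
      Q_E + ∫ x, (F x + F₂ x + γ * V_I' x) ∂μ < V_E + V_I := by
  have hΩint : Integrable Ω μ := by
    have : Integrable (fun x => V_E - Q_E + V_I - γ * V_I' x - F x) μ :=
      (((integrable_const _).sub (hV.const_mul γ)).sub hF)
    exact this.congr (by filter_upwards with x using (hΩ x).symm)
  have hF₂int : Integrable F₂ μ := by
    have hg : Integrable (fun x => Ω x - ε) μ := hΩint.sub (integrable_const ε)
    have : Integrable (fun x => min 0 (Ω x - ε)) μ := by
      have := ((hg.sub hg.abs).const_mul (1/2 : ℝ))
      refine this.congr (Filter.Eventually.of_forall fun x => ?_)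
      simp only [Pi.sub_apply]
      rcases le_total (Ω x - ε) 0 with h | h
      · rw [min_eq_right h, abs_of_nonpos h]; ring
      · rw [min_eq_left h, abs_of_nonneg h]; ring
    exact this.congr (by filter_upwards with x using (hF₂ x).symm)
  have hint : Integrable (fun x => F x + F₂ x + γ * V_I' x) μ :=
    (hF.add hF₂int).add (hV.const_mul γ)
  have hbound : ∀ x, F x + F₂ x + γ * V_I' x ≤ V_E - Q_E + V_I - ε := by
    intro x
    have h1 : F₂ x ≤ Ω x - ε := by rw [hF₂ x]; exact min_le_right _ _
    have := hΩ x
    nlinarith [h1]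
  have hI : ∫ x, (F x + F₂ x + γ * V_I' x) ∂μ ≤ V_E - Q_E + V_I - ε := by
    calc ∫ x, (F x + F₂ x + γ * V_I' x) ∂μ
        ≤ ∫ _x, (V_E - Q_E + V_I - ε) ∂μ :=
          integral_mono hint (integrable_const _) hbound
      _ = V_E - Q_E + V_I - ε := by simp
  constructor <;> linarith
end

section
/- Let (X, μ) be a probability space, γ ≥ 0 and ε > 0 real numbers, and V_E, Q_E, V_I ∈ ℝ constants. Let F, V_I' : X → ℝ be integrable. Define pointwise Ω(x) = V_E − Q_E + V_I − γ·V_I'(x) − F(x) and the ADOPS correction F_2(x) = min(0, Ω(x) − ε) if Q_E < V_E and F_2(x) = max(0, Ω(x)) if Q_E ≥ V_E. Then Q_E + ∫ (F + F_2 + γ·V_I') dμ ≥ V_E + V_I if and only if Q_E ≥ V_E. -/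
open MeasureTheory

/-- **ADOPS equivalence: `Q_IE ≥ V_IE` iff `Q_E ≥ V_E`.**
Let `(X, μ)` be a probability space, `γ ≥ 0`, `ε > 0`, and `V_E, Q_E, V_I ∈ ℝ`
constants. Let `F, V_I' : X → ℝ` be integrable. With
`Ω x = V_E − Q_E + V_I − γ·V_I' x − F x` and the ADOPS correction
`F₂ x = min 0 (Ω x − ε)` if `Q_E < V_E` and `F₂ x = max 0 (Ω x)` if `Q_E ≥ V_E`,
we have `Q_E + ∫ (F + F₂ + γ·V_I') dμ ≥ V_E + V_I` iff `Q_E ≥ V_E`. -/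
theorem stmt_13 {X : Type*} [MeasurableSpace X] (μ : Measure X) [IsProbabilityMeasure μ]
    (γ ε V_E Q_E V_I : ℝ) (hγ : 0 ≤ γ) (hε : 0 < ε)
    (F V_I' : X → ℝ) (hF : Integrable F μ) (hV : Integrable V_I' μ)
    (Ω : X → ℝ) (hΩ : ∀ x, Ω x = V_E - Q_E + V_I - γ * V_I' x - F x)
    (F₂ : X → ℝ)
    (hF₂ : ∀ x, F₂ x = if Q_E < V_E then min 0 (Ω x - ε) else max 0 (Ω x)) :
    Q_E + ∫ x, (F x + F₂ x + γ * V_I' x) ∂μ ≥ V_E + V_I ↔ Q_E ≥ V_E := by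
  set C : ℝ := V_E - Q_E + V_I with hC
  have hΩeq : Ω = fun x => C - (γ * V_I' x + F x) := funext fun x => by rw [hΩ x]; ring
  have hΩint : Integrable Ω μ := by
    rw [hΩeq]; exact (integrable_const C).sub ((hV.const_mul γ).add hF)
  have hF₂int : Integrable F₂ μ := by
    by_cases hlt : Q_E < V_E
    · have : F₂ = fun x => min 0 (Ω x - ε) := funext fun x => by rw [hF₂ x, if_pos hlt]
      rw [this]
      simpa [Pi.inf_def] using (integrable_const (0 : ℝ)).inf (hΩint.sub (integrable_const ε))
    · have : F₂ = fun x => max 0 (Ω x) := funext fun x => by rw [hF₂ x, if_neg hlt]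
      rw [this]
      simpa [Pi.sup_def] using (integrable_const (0 : ℝ)).sup hΩint
  have hgint : Integrable (fun x => F x + F₂ x + γ * V_I' x) μ :=
    (hF.add hF₂int).add (hV.const_mul γ)
  have hconst : ∫ _ : X, C ∂μ = C := by simp
  constructor
  · intro h
    by_contra hlt
    push_neg at hlt
    have hle : ∀ x, F x + F₂ x + γ * V_I' x ≤ C - ε := by
      intro x
      have h1 : F₂ x = min 0 (Ω x - ε) := by rw [hF₂ x, if_pos hlt]
      have h2 := hΩ x
      have := min_le_right (0 : ℝ) (Ω x - ε)
      rw [h1]; linarith [min_le_right (0 : ℝ) (Ω x - ε)]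
    have hint : ∫ x, (F x + F₂ x + γ * V_I' x) ∂μ ≤ C - ε := by
      have := integral_mono hgint (integrable_const (C - ε)) hle
      simpa using this
    have : Q_E + ∫ x, (F x + F₂ x + γ * V_I' x) ∂μ < V_E + V_I := by
      rw [hC] at hint; linarith
    linarith [h]
  · intro h
    have hle : ∀ x, C ≤ F x + F₂ x + γ * V_I' x := by
      intro x
      have h1 : F₂ x = max 0 (Ω x) := by rw [hF₂ x, if_neg (not_lt.mpr h)]
      have h2 := hΩ x
      rw [h1]; linarith [le_max_right (0 : ℝ) (Ω x), le_max_left (0 : ℝ) (Ω x)]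
    have hint : C ≤ ∫ x, (F x + F₂ x + γ * V_I' x) ∂μ := by
      have := integral_mono (integrable_const C) hgint hle
      simpa using this
    rw [hC] at hint; linarith
end

section
/- Let A be a finite nonempty set (of actions), q_E, f, v' : A → ℝ functions, and V_E, V_I ∈ ℝ, γ ≥ 0, ε > 0 constants. For each a ∈ A define Ω(a) = V_E − q_E(a) + V_I − γ·v'(a) − f(a), the ADOPS correction f_2(a) = min(0, Ω(a) − ε) if q_E(a) < V_E and f_2(a) = max(0, Ω(a)) if q_E(a) ≥ V_E, and the shaped intrinsic action value q'_I(a) = f(a) + f_2(a) + γ·v'(a). Then: (i) {a ∈ A : q_E(a) ≥ V_E} = {a ∈ A : q_E(a) + q'_I(a) ≥ V_E + V_I}; (ii) for every a with q_E(a) < V_E, in fact q_E(a) + q'_I(a) ≤ V_E + V_I − ε; and (iii) if there exists a_0 ∈ A with q_E(a_0) ≥ V_E, then every maximizer a of the shaped value q_E + q'_I satisfies q_E(a) ≥ V_E. -/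
/-- **ADOPS over a finite action set excludes extrinsically suboptimal actions
from the shaped argmax.**
Let `A` be a finite nonempty set of actions, `q_E, f, v' : A → ℝ`, and
`V_E, V_I ∈ ℝ`, `γ ≥ 0`, `ε > 0`. For each `a` define
`Ω a = V_E − q_E a + V_I − γ·v' a − f a`, the ADOPS correction
`f₂ a = min 0 (Ω a − ε)` if `q_E a < V_E` and `f₂ a = max 0 (Ω a)` if `q_E a ≥ V_E`,
and the shaped intrinsic action value `q'_I a = f a + f₂ a + γ·v' a`. Then:
(i) `{a | q_E a ≥ V_E} = {a | q_E a + q'_I a ≥ V_E + V_I}`;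
(ii) for every `a` with `q_E a < V_E`, in fact `q_E a + q'_I a ≤ V_E + V_I − ε`;
(iii) if some `a₀` has `q_E a₀ ≥ V_E`, then every maximizer of `q_E + q'_I`
satisfies `q_E a ≥ V_E`. -/
theorem stmt_14 {A : Type*} [Fintype A] [Nonempty A]
    (q_E f v' : A → ℝ) (V_E V_I γ ε : ℝ) (hγ : 0 ≤ γ) (hε : 0 < ε)
    (Ω : A → ℝ) (hΩ : ∀ a, Ω a = V_E - q_E a + V_I - γ * v' a - f a)
    (f₂ : A → ℝ)
    (hf₂ : ∀ a, f₂ a = if q_E a < V_E then min 0 (Ω a - ε) else max 0 (Ω a))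
    (q'I : A → ℝ) (hq : ∀ a, q'I a = f a + f₂ a + γ * v' a) :
    ({a : A | q_E a ≥ V_E} = {a : A | q_E a + q'I a ≥ V_E + V_I}) ∧
    (∀ a, q_E a < V_E → q_E a + q'I a ≤ V_E + V_I - ε) ∧
    ((∃ a₀, q_E a₀ ≥ V_E) →
      ∀ a, (∀ b, q_E b + q'I b ≤ q_E a + q'I a) → q_E a ≥ V_E) := by
  have key : ∀ a, q_E a + q'I a = V_E + V_I - Ω a + f₂ a := by
    intro a; rw [hq a, hΩ a]; ring
  have hlow : ∀ a, q_E a < V_E → q_E a + q'I a ≤ V_E + V_I - ε := by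
    intro a ha
    rw [key a, hf₂ a, if_pos ha]
    have := min_le_right (0 : ℝ) (Ω a - ε)
    linarith
  have hhigh : ∀ a, q_E a ≥ V_E → q_E a + q'I a ≥ V_E + V_I := by
    intro a ha
    rw [key a, hf₂ a, if_neg (not_lt.mpr ha)]
    have := le_max_right (0 : ℝ) (Ω a)
    linarith
  have hset : {a : A | q_E a ≥ V_E} = {a : A | q_E a + q'I a ≥ V_E + V_I} := by
    ext a
    simp only [Set.mem_setOf_eq]
    constructor
    · exact hhigh a
    · intro h
      by_contra hc
      have := hlow a (not_le.mp hc)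
      linarith
  refine ⟨hset, hlow, ?_⟩
  rintro ⟨a₀, ha₀⟩ a hmax
  by_contra hc
  have h1 := hlow a (not_le.mp hc)
  have h2 := hhigh a₀ ha₀
  have := hmax a₀
  linarith
end
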